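/- arXiv:2410.17023 — 2 statements merged into one kernel-verified Lean document; each statement's English description precedes it below -/
import Mathlib

section
/- Let K be a field and K₀ the algebraic closure of its prime subfield in K. If d is a derivation of K and the cocycle f_d(g)(a) = Tr(g⁻¹ d(g) a) on G = SL(n+1,K) (n ≥ 1) is a 1-coboundary, i.e. there is α ∈ A* with f_d(g)(a) = α(a) − α(g a g⁻¹) for all g, a, then d is the zero derivation. -/
/-- If the cocycle `f_d(g)(a) = Tr(g⁻¹·d(g)·a)` on `G = SL(n+1,K)` attached to a
derivation `d` of `K` is a 1-coboundary, i.e. there is a linear functional `α`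
with `f_d(g)(a) = α(a) − α(g a g⁻¹)` for all `g ∈ G` and all traceless `a`, then
`d` is the zero derivation. -/
theorem coboundary_implies_zero_derivation {K : Type*} [Field K]
    (n : ℕ) (hn : 1 ≤ n)
    (d : K → K)
    (hd_add : ∀ x y : K, d (x + y) = d x + d y)
    (hd_mul : ∀ x y : K, d (x * y) = d x * y + x * d y)
    (hcob : ∃ α : Matrix (Fin (n+1)) (Fin (n+1)) K →ₗ[K] K,
      ∀ (g : Matrix.SpecialLinearGroup (Fin (n+1)) K)
        (a : Matrix (Fin (n+1)) (Fin (n+1)) K), Matrix.trace a = 0 →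
          Matrix.trace
            (((g⁻¹ : Matrix.SpecialLinearGroup (Fin (n+1)) K) : Matrix (Fin (n+1)) (Fin (n+1)) K) *
              ((g : Matrix (Fin (n+1)) (Fin (n+1)) K).map d) * a) =
            α a - α ((g : Matrix (Fin (n+1)) (Fin (n+1)) K) * a *
              ((g⁻¹ : Matrix.SpecialLinearGroup (Fin (n+1)) K) : Matrix (Fin (n+1)) (Fin (n+1)) K))) :
    ∀ x : K, d x = 0 := by
  obtain ⟨α, hα⟩ := hcob
  set i0 : Fin (n+1) := 0 with hi0
  set i1 : Fin (n+1) := 1 with hi1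
  have h01 : i0 ≠ i1 := by
    simp [hi0, hi1, Fin.ext_iff, Fin.val_one', Nat.mod_eq_of_lt (by omega : 1 < n+1)]
  have hd0 : d 0 = 0 := by
    have h := hd_add 0 0
    rw [add_zero] at h
    linear_combination -h
  have hd1 : d 1 = 0 := by
    have h := hd_mul 1 1
    rw [mul_one, one_mul] at h
    linear_combination -h
  have hdet : ∀ x : K, (1 + Matrix.single i0 i1 x).det = 1 := by
    intro x
    have h := Matrix.det_of_upperTriangular (M := 1 + Matrix.single i0 i1 x) ?_
    · rw [h]
      apply Finset.prod_eq_one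
      intro i _
      simp only [Matrix.add_apply, Matrix.one_apply_eq, Matrix.single, Matrix.of_apply]
      rw [if_neg, add_zero]
      rintro ⟨rfl, h2⟩
      exact h01 h2.symm
    · intro i j hij
      have h1 : i ≠ j := fun h => by simp [h] at hij
      simp only [Matrix.add_apply, Matrix.one_apply, if_neg h1, Matrix.single,
        Matrix.of_apply, zero_add]
      rw [if_neg]
      rintro ⟨rfl, rfl⟩
      exact absurd hij (by
        simp [hi0, hi1, Fin.lt_iff_val_lt_val, Fin.val_one',
          Nat.mod_eq_of_lt (by omega : 1 < n+1)])
  set g : K → Matrix.SpecialLinearGroup (Fin (n+1)) K :=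
    fun x => ⟨1 + Matrix.single i0 i1 x, hdet x⟩ with hg
  have hmul : ∀ x y : K, g x * g y = g (x + y) := by
    intro x y
    apply Subtype.ext
    show (1 + Matrix.single i0 i1 x) * (1 + Matrix.single i0 i1 y) =
      1 + Matrix.single i0 i1 (x + y)
    rw [Matrix.single_add, mul_add, add_mul, add_mul,
      Matrix.single_mul_single_of_ne (h := h01.symm)]
    simp only [one_mul, mul_one]
    abel
  have hinv : ∀ x : K, (g x)⁻¹ = g (-x) := by
    intro x
    apply inv_eq_of_mul_eq_one_right
    rw [hmul]
    apply Subtype.ext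
    simp [hg]
  have hmap : ∀ x : K, ((g x : Matrix (Fin (n+1)) (Fin (n+1)) K)).map d =
      Matrix.single i0 i1 (d x) := by
    intro x
    ext i j
    show d ((1 + Matrix.single i0 i1 x) i j) = _
    simp only [Matrix.add_apply, Matrix.one_apply, Matrix.single, Matrix.of_apply]
    by_cases hij : i = j
    · subst hij
      rw [if_pos rfl, if_neg, if_neg, add_zero, hd1]
      · rintro ⟨rfl, h2⟩; exact h01 h2.symm
      · rintro ⟨rfl, h2⟩; exact h01 h2.symm
    · rw [if_neg hij, zero_add]
      by_cases h2 : i0 = i ∧ i1 = j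
      · rw [if_pos h2, if_pos h2]
      · rw [if_neg h2, if_neg h2, hd0]
  have key : ∀ x : K, d x = α (Matrix.single i1 i0 (1:K)) -
      α (Matrix.single i1 i0 (1:K) + Matrix.single i0 i0 x
        + Matrix.single i1 i1 (-x)
        + Matrix.single i0 i1 (-(x*x))) := by
    intro x
    have ha : Matrix.trace (Matrix.single i1 i0 (1:K)) = 0 :=
      Matrix.trace_single_eq_of_ne _ _ _ h01.symm
    have h := hα (g x) (Matrix.single i1 i0 (1:K)) ha
    rw [hinv, hmap] at h
    have hcoe : ∀ y : K, (g y : Matrix (Fin (n+1)) (Fin (n+1)) K) =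
        1 + Matrix.single i0 i1 y := fun y => rfl
    rw [hcoe, hcoe] at h
    have hL : (1 + Matrix.single i0 i1 (-x)) * Matrix.single i0 i1 (d x) *
        Matrix.single i1 i0 (1:K) = Matrix.single i0 i0 (d x) := by
      rw [add_mul, one_mul, Matrix.single_mul_single_of_ne (h := h01.symm), add_zero,
        Matrix.single_mul_single_same, mul_one]
    have hR : (1 + Matrix.single i0 i1 x) * Matrix.single i1 i0 (1:K) *
        (1 + Matrix.single i0 i1 (-x)) =
        Matrix.single i1 i0 (1:K) + Matrix.single i0 i0 x
        + Matrix.single i1 i1 (-x) + Matrix.single i0 i1 (-(x*x)) := by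
      rw [add_mul, one_mul, Matrix.single_mul_single_same, add_mul, mul_add, mul_one,
        mul_add, mul_one, Matrix.single_mul_single_same, Matrix.single_mul_single_same]
      simp only [one_mul, mul_one, mul_neg]
      abel
    rw [hL, hR, Matrix.trace_single_eq_same] at h
    exact h
  set β : K := α (Matrix.single i1 i1 (1:K)) - α (Matrix.single i0 i0 (1:K))
    with hβ
  set γ : K := α (Matrix.single i0 i1 (1:K)) with hγ
  have hsm : ∀ (i j : Fin (n+1)) (c : K), Matrix.single i j c =
      c • Matrix.single i j (1:K) := by
    intro i j c
    rw [Matrix.smul_single, smul_eq_mul, mul_one]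
  have hform : ∀ x : K, d x = β * x + γ * (x * x) := by
    intro x
    rw [key x, hsm i0 i0 x, hsm i1 i1 (-x), hsm i0 i1 (-(x*x)), map_add, map_add, map_add,
      LinearMap.map_smul, LinearMap.map_smul, LinearMap.map_smul]
    simp only [smul_eq_mul]
    rw [hβ, hγ]
    ring
  have hβγ : β = -γ := by
    have h := hform 1
    rw [hd1] at h
    linear_combination -h
  have hkey : ∀ x y : K, γ * (x * x - x) * (y * y - y) = 0 := by
    intro x y
    have h := hd_mul x y
    rw [hform x, hform y, hform (x*y), hβγ] at h
    linear_combination h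
  intro x
  have h1 := hkey x x
  have h2 : (γ * (x * x - x)) * (γ * (x * x - x)) = 0 := by
    calc (γ * (x * x - x)) * (γ * (x * x - x)) = γ * (γ * (x*x - x) * (x*x - x)) := by ring
    _ = 0 := by rw [h1, mul_zero]
  have h3 : γ * (x * x - x) = 0 := mul_self_eq_zero.mp h2
  rw [hform x, hβγ]
  linear_combination h3
end

section
/- Let G = SL(n+1,K), A the traceless matrices with adjoint action, and d a nonzero derivation of K. Let a₀ = e_{n+1,1} (the matrix unit with 1 in position (n+1,1)). For every g ∈ G stabilizing the line K·a₀ under the adjoint action (equivalently, g with g_{1,j} = 0 for j > 1 and g_{i,n+1} = 0 for i ≤ n), one has Tr(g · d(g⁻¹) · a₀) = 0. -/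
/-- If `g ∈ SL(n+1,K)` stabilizes the line spanned by the matrix unit
`a₀ = e_{n+1,1}` under the adjoint action (`g⁻¹ a₀ g = c • a₀`), then
`Tr(g · d(g⁻¹) · a₀) = 0` for any nonzero derivation `d` of `K`. -/
theorem trace_vanishes_on_stabilizer {K : Type*} [Field K] (n : ℕ) (hn : 1 ≤ n)
    (d : K → K)
    (hd_add : ∀ x y : K, d (x + y) = d x + d y)
    (hd_mul : ∀ x y : K, d (x * y) = d x * y + x * d y)
    (hd_ne : d ≠ 0)
    (g : Matrix.SpecialLinearGroup (Fin (n+1)) K)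
    (hg : ∃ c : K,
      ((g⁻¹ : Matrix.SpecialLinearGroup (Fin (n+1)) K) : Matrix (Fin (n+1)) (Fin (n+1)) K) *
        Matrix.single (Fin.last n) (0 : Fin (n+1)) (1 : K) *
        (g : Matrix (Fin (n+1)) (Fin (n+1)) K) =
      c • Matrix.single (Fin.last n) (0 : Fin (n+1)) (1 : K)) :
    Matrix.trace
      ((g : Matrix (Fin (n+1)) (Fin (n+1)) K) *
        (((g⁻¹ : Matrix.SpecialLinearGroup (Fin (n+1)) K) : Matrix (Fin (n+1)) (Fin (n+1)) K).map d) *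
        Matrix.single (Fin.last n) (0 : Fin (n+1)) (1 : K)) = 0 := by
  obtain ⟨c, hc⟩ := hg
  set A := ((g⁻¹ : Matrix.SpecialLinearGroup (Fin (n+1)) K) : Matrix (Fin (n+1)) (Fin (n+1)) K) with hA
  set B := ((g : Matrix (Fin (n+1)) (Fin (n+1)) K)) with hB
  have hlast : (Fin.last n) ≠ (0 : Fin (n+1)) := by
    simp [Fin.ext_iff, Fin.last]; omega
  have d0 : d 0 = 0 := by
    simpa using hd_add 0 0
  -- entrywise equation
  have key : ∀ i j, A i (Fin.last n) * B 0 j =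
      c * (if Fin.last n = i ∧ (0 : Fin (n+1)) = j then 1 else 0) := by
    intro i j
    have := congrFun (congrFun hc i) j
    simpa [Matrix.mul_apply, Matrix.single, Matrix.smul_apply, mul_comm,
      Finset.mul_sum, ite_and, Finset.sum_ite_eq, Finset.sum_ite_eq'] using this
  -- determinants nonzero
  have detB : B.det = 1 := g.2
  have detA : A.det = 1 := (g⁻¹).2
  -- exists i with A i last ≠ 0
  have hcol : ∃ i, A i (Fin.last n) ≠ 0 := by
    by_contra h
    push_neg at h
    have : A.det = 0 := Matrix.det_eq_zero_of_column_eq_zero (Fin.last n) h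
    rw [detA] at this; exact one_ne_zero this
  obtain ⟨i₀, hi₀⟩ := hcol
  have hrow0 : ∀ j ≠ (0 : Fin (n+1)), B 0 j = 0 := by
    intro j hj
    have := key i₀ j
    rw [if_neg (by tauto), mul_zero] at this
    exact (mul_eq_zero.mp this).resolve_left hi₀
  have hB00 : B 0 0 ≠ 0 := by
    intro h0
    have : B.det = 0 := Matrix.det_eq_zero_of_row_eq_zero 0 (fun j => by
      by_cases hj : j = 0
      · rw [hj]; exact h0
      · exact hrow0 j hj)
    rw [detB] at this; exact one_ne_zero this
  have hA0 : A 0 (Fin.last n) = 0 := by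
    have := key 0 0
    rw [if_neg (by tauto), mul_zero] at this
    exact (mul_eq_zero.mp this).resolve_right hB00
  -- compute the trace
  have : ∀ i, ((B * A.map d * Matrix.single (Fin.last n) (0 : Fin (n+1)) (1:K))) i i
      = if i = 0 then (B * A.map d) 0 (Fin.last n) else 0 := by
    intro i
    by_cases hi : i = (0 : Fin (n+1))
    · subst hi
      simp [Matrix.mul_single_apply_same]
    · rw [if_neg hi]
      exact Matrix.mul_single_apply_of_ne 1 (Fin.last n) 0 i i hi (B * A.map d)
  rw [Matrix.trace]
  simp only [Matrix.diag_apply, this]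
  rw [Finset.sum_ite_eq' Finset.univ (0 : Fin (n+1))]
  simp only [Finset.mem_univ, if_true]
  rw [Matrix.mul_apply]
  apply Finset.sum_eq_zero
  intro k _
  by_cases hk : k = 0
  · subst hk
    simp [Matrix.map_apply, hA0, d0]
  · simp [hrow0 k hk]
end
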